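/- If some subsequence ‖·‖°_{n_k} of the normalized norms produced by the max-relaxation iteration converges, uniformly on every bounded subset of ℝ^m, to a Barabanov norm ‖·‖* of 𝒜, then the whole sequence ‖·‖°_n converges, uniformly on every bounded subset of ℝ^m, to the same Barabanov norm ‖·‖*. -/

import Mathlib

open Matrix Filter Topology Bornology Pointwise

/-- `N` is a norm on `ℝ^m`: nonnegative, definite, absolutely homogeneous, subadditive. -/
def IsNorm {m : ℕ} (N : (Fin m → ℝ) → ℝ) : Prop :=
  (∀ x, 0 ≤ N x) ∧ (∀ x, N x = 0 → x = 0) ∧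
    (∀ (t : ℝ) (x), N (t • x) = |t| * N x) ∧ (∀ x y, N (x + y) ≤ N x + N y)

/-- `N` is a seminorm on `ℝ^m`. -/
def IsSeminorm {m : ℕ} (N : (Fin m → ℝ) → ℝ) : Prop :=
  (∀ x, 0 ≤ N x) ∧
    (∀ (t : ℝ) (x), N (t • x) = |t| * N x) ∧ (∀ x y, N (x + y) ≤ N x + N y)

/-- The family `A` is irreducible: the matrices have no common invariant subspace
other than `⊥` and `⊤`. -/
def IsIrreducibleFamily {m r : ℕ} (A : Fin r → Matrix (Fin m) (Fin m) ℝ) : Prop :=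
  ∀ W : Submodule ℝ (Fin m → ℝ), (∀ i, ∀ x ∈ W, (A i).mulVec x ∈ W) → W = ⊥ ∨ W = ⊤

/-- The operator norm of a matrix acting on `ℝ^m` (with its sup norm). -/
noncomputable def matNorm {m : ℕ} (M : Matrix (Fin m) (Fin m) ℝ) : ℝ :=
  ‖LinearMap.toContinuousLinearMap M.mulVecLin‖

/-- The joint spectral radius of the family `A`:
`limsup_n (max over words of length n of the norm of the product)^(1/n)`. -/
noncomputable def jsr {m r : ℕ} (A : Fin r → Matrix (Fin m) (Fin m) ℝ) : ℝ :=
  Filter.atTop.limsup fun n : ℕ =>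
    (⨆ w : Fin n → Fin r, matNorm (List.ofFn fun k => A (w k)).prod) ^ (1 / (n : ℝ))

/-- `maxA A N x = max_i N (A_i x)`. -/
noncomputable def maxA {m r : ℕ} (A : Fin r → Matrix (Fin m) (Fin m) ℝ)
    (N : (Fin m → ℝ) → ℝ) (x : Fin m → ℝ) : ℝ :=
  ⨆ i, N ((A i).mulVec x)

/-- `ρ⁺ = max_{x ≠ 0} (max_i N (A_i x)) / N x`. -/
noncomputable def rhoSup {m r : ℕ} (A : Fin r → Matrix (Fin m) (Fin m) ℝ)
    (N : (Fin m → ℝ) → ℝ) : ℝ :=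
  sSup ((fun x => maxA A N x / N x) '' {x | x ≠ 0})

/-- `ρ⁻ = min_{x ≠ 0} (max_i N (A_i x)) / N x`. -/
noncomputable def rhoInf {m r : ℕ} (A : Fin r → Matrix (Fin m) (Fin m) ℝ)
    (N : (Fin m → ℝ) → ℝ) : ℝ :=
  sInf ((fun x => maxA A N x / N x) '' {x | x ≠ 0})

/-- An averaging function: continuous on positives, `γ t t = t`, and strictly
between `min` and `max` off the diagonal. -/
def IsAveraging (γ : ℝ → ℝ → ℝ) : Prop :=
  ContinuousOn (fun p : ℝ × ℝ => γ p.1 p.2) {p | 0 < p.1 ∧ 0 < p.2} ∧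
    (∀ t, 0 < t → γ t t = t) ∧
    ∀ t s, 0 < t → 0 < s → t ≠ s → min t s < γ t s ∧ γ t s < max t s

/-- The max-relaxation iteration: `‖x‖_{n+1} = max (‖x‖_n, γ_n⁻¹ max_i ‖A_i x‖_n)`
where `γ_n = γ (ρ⁻_n, ρ⁺_n)`. -/
noncomputable def iterN {m r : ℕ} (A : Fin r → Matrix (Fin m) (Fin m) ℝ)
    (γ : ℝ → ℝ → ℝ) (N0 : (Fin m → ℝ) → ℝ) : ℕ → (Fin m → ℝ) → ℝ
  | 0 => N0
  | n + 1 => fun x =>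
      max (iterN A γ N0 n x)
        ((γ (rhoInf A (iterN A γ N0 n)) (rhoSup A (iterN A γ N0 n)))⁻¹ *
          maxA A (iterN A γ N0 n) x)

/-- The normalized norms `‖x‖°_n = ‖x‖_n / ‖e‖_n` of the max-relaxation iteration
(for `n = 0` this equals `‖x‖_0` since `‖e‖_0 = 1`). -/
noncomputable def iterNnorm {m r : ℕ} (A : Fin r → Matrix (Fin m) (Fin m) ℝ)
    (γ : ℝ → ℝ → ℝ) (N0 : (Fin m → ℝ) → ℝ) (e : Fin m → ℝ) (n : ℕ) :
    (Fin m → ℝ) → ℝ :=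
  fun x => iterN A γ N0 n x / iterN A γ N0 n e

/-- `e⁺(N, N') = max_{x ≠ 0} N x / N' x`. -/
noncomputable def ePlus {m : ℕ} (N N' : (Fin m → ℝ) → ℝ) : ℝ :=
  sSup ((fun x => N x / N' x) '' {x | x ≠ 0})

/-- `e⁻(N, N') = min_{x ≠ 0} N x / N' x`. -/
noncomputable def eMinus {m : ℕ} (N N' : (Fin m → ℝ) → ℝ) : ℝ :=
  sInf ((fun x => N x / N' x) '' {x | x ≠ 0})

/-- The eccentricity of the norm `N` with respect to the norm `N'`. -/
noncomputable def ecc {m : ℕ} (N N' : (Fin m → ℝ) → ℝ) : ℝ :=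
  ePlus N N' / eMinus N N'

/-!
Measure the distance of `‖·‖_n` to the Barabanov norm `‖·‖*` by the eccentricity
`e⁺_n / e⁻_n`, where `e⁻_n ‖·‖* ≤ ‖·‖_n ≤ e⁺_n ‖·‖*` are the optimal constants. Since
`max_i ‖A_i x‖* = ρ ‖x‖*`, one relaxation step turns these bounds into
`e⁻_n M ‖·‖* ≤ ‖·‖_{n+1} ≤ e⁺_n M ‖·‖*` with `M = max (1, ρ / γ_n)`, so the eccentricity never
increases. Uniform convergence of the normalized subsequence on the unit sphere drives the
eccentricity along the subsequence to `1`, hence along the whole sequence; and a norm of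
eccentricity `E` with respect to `‖·‖*`, normalized at `e` where `‖e‖* = 1`, differs from `‖·‖*`
by at most `(E - 1) ‖·‖*`.
-/

namespace IsSeminorm

variable {m : ℕ} {N : (Fin m → ℝ) → ℝ}

lemma map_zero (h : IsSeminorm N) : N 0 = 0 := by
  simpa using h.2.1 0 0

def toSeminorm (h : IsSeminorm N) : Seminorm ℝ (Fin m → ℝ) :=
  Seminorm.of N h.2.2 fun a x => by rw [h.2.1, Real.norm_eq_abs]

lemma continuous (h : IsSeminorm N) : Continuous N :=
  continuousOn_univ.1 (h.toSeminorm.convexOn.continuousOn isOpen_univ)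

lemma exists_le_mul_norm (h : IsSeminorm N) : ∃ C, 0 < C ∧ ∀ x, N x ≤ C * ‖x‖ :=
  h.toSeminorm.bound_of_continuous_normedSpace h.continuous

lemma exists_forall_le_of_isBounded (h : IsSeminorm N) {S : Set (Fin m → ℝ)}
    (hS : IsBounded S) : ∃ C, ∀ x ∈ S, N x ≤ C := by
  obtain ⟨C, hC, hle⟩ := h.exists_le_mul_norm
  obtain ⟨R, hR⟩ := hS.exists_norm_le
  exact ⟨C * R, fun x hx => (hle x).trans (mul_le_mul_of_nonneg_left (hR x hx) hC.le)⟩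

lemma eq_norm_mul {x : Fin m → ℝ} (h : IsSeminorm N) (hx : x ≠ 0) :
    N x = ‖x‖ * N (‖x‖⁻¹ • x) := by
  rw [h.2.1, abs_inv, abs_norm, mul_inv_cancel_left₀ (norm_ne_zero_iff.2 hx)]

lemma div_const (h : IsSeminorm N) {t : ℝ} (ht : 0 ≤ t) : IsSeminorm fun x => N x / t :=
  ⟨fun x => div_nonneg (h.1 x) ht, fun a x => by simp only [h.2.1, mul_div_assoc],
    fun x y => by rw [← add_div]; exact div_le_div_of_nonneg_right (h.2.2 x y) ht⟩

lemma abs_sub_le_mul_of_forall_norm_eq_one {N' : (Fin m → ℝ) → ℝ} (h : IsSeminorm N)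
    (h' : IsSeminorm N') {δ : ℝ} (hδ : ∀ u, ‖u‖ = 1 → |N u - N' u| ≤ δ * N' u) (x) :
    |N x - N' x| ≤ δ * N' x := by
  obtain rfl | hx := eq_or_ne x 0
  · simp [h.map_zero, h'.map_zero]
  calc |N x - N' x| = ‖x‖ * |N (‖x‖⁻¹ • x) - N' (‖x‖⁻¹ • x)| := by
        rw [h.eq_norm_mul hx, h'.eq_norm_mul hx, ← mul_sub, abs_mul, abs_norm]
    _ ≤ ‖x‖ * (δ * N' (‖x‖⁻¹ • x)) :=
        mul_le_mul_of_nonneg_left (hδ _ (norm_smul_inv_norm hx)) (norm_nonneg x)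
    _ = δ * N' x := by rw [h'.eq_norm_mul hx]; ring

end IsSeminorm

namespace IsNorm

variable {m : ℕ} {N : (Fin m → ℝ) → ℝ}

lemma isSeminorm (h : IsNorm N) : IsSeminorm N :=
  ⟨h.1, h.2.2.1, h.2.2.2⟩

lemma pos (h : IsNorm N) {x : Fin m → ℝ} (hx : x ≠ 0) : 0 < N x :=
  (h.1 x).lt_of_ne fun h0 => hx (h.2.1 x h0.symm)

lemma exists_mul_norm_le [NeZero m] (h : IsNorm N) : ∃ c, 0 < c ∧ ∀ x, c * ‖x‖ ≤ N x := by
  obtain ⟨u₀, hu₀, hmin⟩ := (isCompact_sphere (0 : Fin m → ℝ) 1).exists_isMinOn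
    (NormedSpace.sphere_nonempty.2 zero_le_one) h.isSeminorm.continuous.continuousOn
  have hu₀_ne : u₀ ≠ 0 := ne_zero_of_mem_unit_sphere ⟨u₀, hu₀⟩
  refine ⟨N u₀, h.pos hu₀_ne, fun x => ?_⟩
  obtain rfl | hx := eq_or_ne x 0
  · simp [h.isSeminorm.map_zero]
  rw [h.isSeminorm.eq_norm_mul hx, mul_comm]
  exact mul_le_mul_of_nonneg_left (hmin (mem_sphere_zero_iff_norm.2 (norm_smul_inv_norm hx)))
    (norm_nonneg x)

lemma max_const_mul {M : (Fin m → ℝ) → ℝ} (hN : IsNorm N) (hM : IsSeminorm M) {c : ℝ}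
    (hc : 0 ≤ c) : IsNorm fun x => max (N x) (c * M x) := by
  refine ⟨fun x => (hN.1 x).trans (le_max_left _ _),
    fun x hx => hN.2.1 x (le_antisymm (hx ▸ le_max_left _ _) (hN.1 x)), fun t x => ?_,
    fun x y => max_le ?_ ?_⟩
  · show max (N (t • x)) (c * M (t • x)) = |t| * max (N x) (c * M x)
    rw [hN.2.2.1, hM.2.1, mul_left_comm, mul_max_of_nonneg _ _ (abs_nonneg t)]
  · exact (hN.2.2.2 x y).trans (add_le_add (le_max_left _ _) (le_max_left _ _))
  · calc c * M (x + y) ≤ c * M x + c * M y := by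
          rw [← mul_add]; exact mul_le_mul_of_nonneg_left (hM.2.2 x y) hc
      _ ≤ _ := add_le_add (le_max_right _ _) (le_max_right _ _)

end IsNorm

section Eccentricity

variable {m : ℕ} {N N' : (Fin m → ℝ) → ℝ}

lemma eMinus_mul_le (hN : IsSeminorm N) (hN' : IsNorm N') (x : Fin m → ℝ) :
    eMinus N N' * N' x ≤ N x := by
  obtain rfl | hx := eq_or_ne x 0
  · simp [hN.map_zero, hN'.isSeminorm.map_zero]
  rw [← le_div_iff₀ (hN'.pos hx)]
  refine csInf_le ⟨0, ?_⟩ ⟨x, hx, rfl⟩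
  rintro _ ⟨y, -, rfl⟩
  exact div_nonneg (hN.1 y) (hN'.1 y)

variable [NeZero m]

lemma bddAbove_ratio (hN : IsSeminorm N) (hN' : IsNorm N') :
    BddAbove ((fun x => N x / N' x) '' {x | x ≠ 0}) := by
  obtain ⟨C, hC, hC'⟩ := hN.exists_le_mul_norm
  obtain ⟨c, hc, hc'⟩ := hN'.exists_mul_norm_le
  refine ⟨C / c, ?_⟩
  rintro _ ⟨x, hx, rfl⟩
  rw [div_le_div_iff₀ (hN'.pos hx) hc]
  calc N x * c ≤ C * ‖x‖ * c := mul_le_mul_of_nonneg_right (hC' x) hc.le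
    _ = C * (c * ‖x‖) := by ring
    _ ≤ C * N' x := mul_le_mul_of_nonneg_left (hc' x) hC.le

lemma le_ePlus_mul (hN : IsSeminorm N) (hN' : IsNorm N') (x : Fin m → ℝ) :
    N x ≤ ePlus N N' * N' x := by
  obtain rfl | hx := eq_or_ne x 0
  · simp [hN.map_zero, hN'.isSeminorm.map_zero]
  rw [← div_le_iff₀ (hN'.pos hx)]
  exact le_csSup (bddAbove_ratio hN hN') ⟨x, hx, rfl⟩

lemma nonempty_ratio : ((fun x => N x / N' x) '' {x | x ≠ 0}).Nonempty :=
  let ⟨x, hx⟩ := exists_ne (0 : Fin m → ℝ)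
  ⟨_, x, hx, rfl⟩

lemma ePlus_le (hN' : IsNorm N') {b : ℝ} (h : ∀ x, N x ≤ b * N' x) : ePlus N N' ≤ b := by
  refine csSup_le nonempty_ratio ?_
  rintro _ ⟨x, hx, rfl⟩
  exact (div_le_iff₀ (hN'.pos hx)).2 (h x)

lemma le_eMinus (hN' : IsNorm N') {a : ℝ} (h : ∀ x, a * N' x ≤ N x) : a ≤ eMinus N N' := by
  refine le_csInf nonempty_ratio ?_
  rintro _ ⟨x, hx, rfl⟩
  exact (le_div_iff₀ (hN'.pos hx)).2 (h x)

lemma eMinus_pos (hN : IsNorm N) (hN' : IsNorm N') : 0 < eMinus N N' := by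
  obtain ⟨c, hc, hc'⟩ := hN.exists_mul_norm_le
  obtain ⟨C, hC, hC'⟩ := hN'.isSeminorm.exists_le_mul_norm
  refine (div_pos hc hC).trans_le (le_eMinus hN' fun x => ?_)
  calc c / C * N' x ≤ c / C * (C * ‖x‖) :=
        mul_le_mul_of_nonneg_left (hC' x) (div_pos hc hC).le
    _ = c * ‖x‖ := by field_simp
    _ ≤ N x := hc' x

lemma eMinus_le_ePlus (hN : IsNorm N) (hN' : IsNorm N') : eMinus N N' ≤ ePlus N N' := by
  obtain ⟨x, hx⟩ := exists_ne (0 : Fin m → ℝ)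
  exact le_of_mul_le_mul_right
    ((eMinus_mul_le hN.isSeminorm hN' x).trans (le_ePlus_mul hN.isSeminorm hN' x)) (hN'.pos hx)

lemma ePlus_pos (hN : IsNorm N) (hN' : IsNorm N') : 0 < ePlus N N' :=
  (eMinus_pos hN hN').trans_le (eMinus_le_ePlus hN hN')

lemma one_le_ecc (hN : IsNorm N) (hN' : IsNorm N') : 1 ≤ ecc N N' :=
  (one_le_div (eMinus_pos hN hN')).2 (eMinus_le_ePlus hN hN')

lemma ecc_le_of_abs_div_sub_le (hN : IsNorm N) (hN' : IsNorm N') {t δ : ℝ} (ht : 0 < t)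
    (hδ : δ < 1) (h : ∀ x, |N x / t - N' x| ≤ δ * N' x) :
    ecc N N' ≤ (1 + δ) / (1 - δ) := by
  have hup : ePlus N N' ≤ t * (1 + δ) := ePlus_le hN' fun x =>
    calc N x = t * (N x / t) := by field_simp
      _ ≤ t * ((1 + δ) * N' x) :=
          mul_le_mul_of_nonneg_left (by linarith [(abs_le.1 (h x)).2]) ht.le
      _ = t * (1 + δ) * N' x := by ring
  have hlow : t * (1 - δ) ≤ eMinus N N' := le_eMinus hN' fun x =>
    calc t * (1 - δ) * N' x = t * ((1 - δ) * N' x) := by ring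
      _ ≤ t * (N x / t) :=
          mul_le_mul_of_nonneg_left (by linarith [(abs_le.1 (h x)).1]) ht.le
      _ = N x := by field_simp
  calc ecc N N' ≤ t * (1 + δ) / (t * (1 - δ)) :=
        div_le_div₀ ((ePlus_pos hN hN').le.trans hup) hup (mul_pos ht (sub_pos.2 hδ)) hlow
    _ = (1 + δ) / (1 - δ) := mul_div_mul_left _ _ ht.ne'

lemma abs_div_sub_le_ecc_sub_one_mul (hN : IsNorm N) (hN' : IsNorm N') {e : Fin m → ℝ}
    (he : N' e = 1) (x : Fin m → ℝ) : |N x / N e - N' x| ≤ (ecc N N' - 1) * N' x := by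
  set a := eMinus N N'
  set b := ePlus N N'
  have ha : 0 < a := eMinus_pos hN hN'
  have hb : 0 < b := ePlus_pos hN hN'
  have hNe_ge : a ≤ N e := by simpa [he] using eMinus_mul_le hN.isSeminorm hN' e
  have hNe_le : N e ≤ b := by simpa [he] using le_ePlus_mul hN.isSeminorm hN' e
  have hNe : 0 < N e := ha.trans_le hNe_ge
  have hx : 0 ≤ N' x := hN'.1 x
  have hup : N x / N e ≤ b / a * N' x :=
    calc N x / N e ≤ b * N' x / a :=
          div_le_div₀ (by positivity) (le_ePlus_mul hN.isSeminorm hN' x) ha hNe_ge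
      _ = b / a * N' x := by ring
  have hlow : a / b * N' x ≤ N x / N e :=
    calc a / b * N' x = a * N' x / b := by ring
      _ ≤ N x / N e := div_le_div₀ (hN.1 x) (eMinus_mul_le hN.isSeminorm hN' x) hNe hNe_le
  have hab : a / b + b / a - 2 = (b - a) ^ 2 / (a * b) := by field_simp; ring
  have hsq : 0 ≤ (b - a) ^ 2 / (a * b) := by positivity
  show |N x / N e - N' x| ≤ (b / a - 1) * N' x
  rw [abs_sub_le_iff]
  constructor <;> nlinarith

end Eccentricity

section MaxA

variable {m r : ℕ} {A : Fin r → Matrix (Fin m) (Fin m) ℝ} {N N' : (Fin m → ℝ) → ℝ}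

lemma le_maxA (i : Fin r) (x : Fin m → ℝ) : N (A i *ᵥ x) ≤ maxA A N x :=
  le_ciSup (f := fun j => N (A j *ᵥ x)) (Set.finite_range _).bddAbove i

lemma maxA_nonneg (hN : ∀ x, 0 ≤ N x) (x : Fin m → ℝ) : 0 ≤ maxA A N x :=
  Real.iSup_nonneg fun _ => hN _

lemma maxA_mono (h : ∀ x, N x ≤ N' x) (x : Fin m → ℝ) : maxA A N x ≤ maxA A N' x :=
  ciSup_mono (Set.finite_range _).bddAbove fun _ => h _

lemma maxA_const_mul {b : ℝ} (hb : 0 ≤ b) (x : Fin m → ℝ) :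
    maxA A (fun y => b * N y) x = b * maxA A N x :=
  (Real.mul_iSup_of_nonneg hb _).symm

lemma isSeminorm_maxA (hN : IsSeminorm N) : IsSeminorm (maxA A N) := by
  refine ⟨maxA_nonneg hN.1, fun t x => ?_, fun x y => ?_⟩
  · simp only [maxA, Matrix.mulVec_smul, hN.2.1]
    exact maxA_const_mul (abs_nonneg t) x
  · refine Real.iSup_le (fun i => ?_) (add_nonneg (maxA_nonneg hN.1 x) (maxA_nonneg hN.1 y))
    rw [Matrix.mulVec_add]
    exact (hN.2.2 _ _).trans (add_le_add (le_maxA i x) (le_maxA i y))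

lemma isNorm_maxA (hN : IsNorm N) (hker : ∀ x : Fin m → ℝ, x ≠ 0 → ∃ i, A i *ᵥ x ≠ 0) :
    IsNorm (maxA A N) := by
  have hs := isSeminorm_maxA (A := A) hN.isSeminorm
  refine ⟨hs.1, fun x hx => ?_, hs.2.1, hs.2.2⟩
  by_contra hx0
  obtain ⟨i, hi⟩ := hker x hx0
  exact hi (hN.2.1 _ (le_antisymm (hx ▸ le_maxA i x) (hN.1 _)))

lemma max_mul_maxA_le {ρ b c : ℝ} (hN' : ∀ x, 0 ≤ N' x) (hbar : ∀ x, ρ * N' x = maxA A N' x)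
    (hb : 0 ≤ b) (hc : 0 ≤ c) (h : ∀ x, N x ≤ b * N' x) (x : Fin m → ℝ) :
    max (N x) (c * maxA A N x) ≤ max 1 (c * ρ) * (b * N' x) :=
  calc max (N x) (c * maxA A N x) ≤ max (b * N' x) (c * maxA A (fun y => b * N' y) x) :=
        max_le_max (h x) (mul_le_mul_of_nonneg_left (maxA_mono h x) hc)
    _ = max 1 (c * ρ) * (b * N' x) := by
        rw [maxA_const_mul hb, ← hbar, max_mul_of_nonneg _ _ (mul_nonneg hb (hN' x))]
        congr 1 <;> ring

lemma le_max_mul_maxA {ρ a c : ℝ} (hN' : ∀ x, 0 ≤ N' x) (hbar : ∀ x, ρ * N' x = maxA A N' x)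
    (ha : 0 ≤ a) (hc : 0 ≤ c) (h : ∀ x, a * N' x ≤ N x) (x : Fin m → ℝ) :
    max 1 (c * ρ) * (a * N' x) ≤ max (N x) (c * maxA A N x) :=
  calc max 1 (c * ρ) * (a * N' x) = max (a * N' x) (c * maxA A (fun y => a * N' y) x) := by
        rw [maxA_const_mul ha, ← hbar, max_mul_of_nonneg _ _ (mul_nonneg ha (hN' x))]
        congr 1 <;> ring
    _ ≤ max (N x) (c * maxA A N x) :=
        max_le_max (h x) (mul_le_mul_of_nonneg_left (maxA_mono h x) hc)

end MaxA

lemma IsIrreducibleFamily.exists_mulVec_ne_zero {m r : ℕ} {A : Fin r → Matrix (Fin m) (Fin m) ℝ}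
    (hA : IsIrreducibleFamily A) (hm : 2 ≤ m) {x : Fin m → ℝ} (hx : x ≠ 0) :
    ∃ i, A i *ᵥ x ≠ 0 := by
  by_contra! hAx
  let K : Submodule ℝ (Fin m → ℝ) := ⨅ i, LinearMap.ker (A i).mulVecLin
  have hK : ∀ y ∈ K, ∀ i, A i *ᵥ y = 0 := fun y hy i => by
    simpa using (Submodule.mem_iInf _).1 hy i
  have hxK : x ∈ K := (Submodule.mem_iInf _).2 fun i => by simpa using hAx i
  have hK_top : K = ⊤ := (hA K fun i y hy => by rw [hK y hy i]; exact K.zero_mem).resolve_left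
    fun hbot => hx ((Submodule.mem_bot ℝ).1 (hbot ▸ hxK))
  -- every `A i` vanishes, so every subspace is invariant, in particular the line through `x`
  rcases hA (ℝ ∙ x) fun i y _ => by rw [hK y (hK_top ▸ Submodule.mem_top) i]; exact zero_mem _
    with hbot | htop
  · exact hx (Submodule.span_singleton_eq_bot.1 hbot)
  · have := finrank_span_singleton (K := ℝ) hx
    rw [htop, finrank_top, Module.finrank_fin_fun] at this
    omega

lemma IsAveraging.pos {γ : ℝ → ℝ → ℝ} (hγ : IsAveraging γ) {a b : ℝ} (ha : 0 < a) (hb : 0 < b) :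
    0 < γ a b := by
  obtain rfl | hab := eq_or_ne a b
  · rw [hγ.2.1 a ha]; exact ha
  · exact (lt_min ha hb).trans (hγ.2.2 a b ha hb hab).1

section Relaxation

variable {m r : ℕ} [NeZero m] {A : Fin r → Matrix (Fin m) (Fin m) ℝ} {γ : ℝ → ℝ → ℝ}
  {N N0 N' : (Fin m → ℝ) → ℝ}

lemma IsAveraging.rhoInf_rhoSup_pos (hγ : IsAveraging γ) (hN : IsNorm N)
    (hker : ∀ x : Fin m → ℝ, x ≠ 0 → ∃ i, A i *ᵥ x ≠ 0) :
    0 < γ (rhoInf A N) (rhoSup A N) :=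
  hγ.pos (eMinus_pos (isNorm_maxA hN hker) hN) (ePlus_pos (isNorm_maxA hN hker) hN)

lemma isNorm_iterN (hγ : IsAveraging γ) (hN0 : IsNorm N0)
    (hker : ∀ x : Fin m → ℝ, x ≠ 0 → ∃ i, A i *ᵥ x ≠ 0) (n : ℕ) : IsNorm (iterN A γ N0 n) := by
  induction n with
  | zero => exact hN0
  | succ n ih =>
    exact ih.max_const_mul (isSeminorm_maxA ih.isSeminorm)
      (inv_nonneg.2 (hγ.rhoInf_rhoSup_pos ih hker).le)

lemma ecc_max_mul_maxA_le {ρ c : ℝ} (hN : IsNorm N) (hN' : IsNorm N')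
    (hbar : ∀ x, ρ * N' x = maxA A N' x) (hc : 0 ≤ c) :
    ecc (fun x => max (N x) (c * maxA A N x)) N' ≤ ecc N N' := by
  have hM : 0 < max 1 (c * ρ) := one_pos.trans_le (le_max_left _ _)
  have ha := eMinus_pos hN hN'
  have hb := ePlus_pos hN hN'
  have hup : ePlus (fun x => max (N x) (c * maxA A N x)) N' ≤ max 1 (c * ρ) * ePlus N N' :=
    ePlus_le hN' fun x => (max_mul_maxA_le hN'.1 hbar hb.le hc
      (le_ePlus_mul hN.isSeminorm hN') x).trans_eq (mul_assoc _ _ _).symm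
  have hlow : max 1 (c * ρ) * eMinus N N' ≤ eMinus (fun x => max (N x) (c * maxA A N x)) N' :=
    le_eMinus hN' fun x => (mul_assoc _ _ _).trans_le
      (le_max_mul_maxA hN'.1 hbar ha.le hc (eMinus_mul_le hN.isSeminorm hN') x)
  calc ecc (fun x => max (N x) (c * maxA A N x)) N'
      ≤ max 1 (c * ρ) * ePlus N N' / (max 1 (c * ρ) * eMinus N N') :=
        div_le_div₀ (by positivity) hup (by positivity) hlow
    _ = ecc N N' := mul_div_mul_left _ _ hM.ne'

lemma antitone_ecc_iterN {ρ : ℝ} (hγ : IsAveraging γ) (hN0 : IsNorm N0)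
    (hker : ∀ x : Fin m → ℝ, x ≠ 0 → ∃ i, A i *ᵥ x ≠ 0) (hN' : IsNorm N')
    (hbar : ∀ x, ρ * N' x = maxA A N' x) : Antitone fun n => ecc (iterN A γ N0 n) N' :=
  antitone_nat_of_succ_le fun n =>
    ecc_max_mul_maxA_le (isNorm_iterN hγ hN0 hker n) hN' hbar
      (inv_nonneg.2 (hγ.rhoInf_rhoSup_pos (isNorm_iterN hγ hN0 hker n) hker).le)

end Relaxation

section Convergence

variable {m : ℕ} [NeZero m] {ι : Type*} {l : Filter ι} {N' : (Fin m → ℝ) → ℝ}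

lemma eventually_abs_sub_le_mul_of_tendstoUniformlyOn_sphere {F : ι → (Fin m → ℝ) → ℝ}
    (hF : ∀ k, IsSeminorm (F k)) (hN' : IsNorm N')
    (h : TendstoUniformlyOn F N' l (Metric.sphere 0 1)) {δ : ℝ} (hδ : 0 < δ) :
    ∀ᶠ k in l, ∀ x, |F k x - N' x| ≤ δ * N' x := by
  obtain ⟨c, hc, hc'⟩ := hN'.exists_mul_norm_le
  filter_upwards [Metric.tendstoUniformlyOn_iff.1 h (δ * c) (mul_pos hδ hc)] with k hk
  refine (hF k).abs_sub_le_mul_of_forall_norm_eq_one hN'.isSeminorm fun u hu => ?_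
  have hku := hk u (mem_sphere_zero_iff_norm.2 hu)
  rw [dist_comm, Real.dist_eq] at hku
  calc |F k u - N' u| ≤ δ * c := hku.le
    _ ≤ δ * N' u := mul_le_mul_of_nonneg_left (by simpa [hu] using hc' u) hδ.le

lemma tendsto_ecc_of_tendstoUniformlyOn_sphere {N : ι → (Fin m → ℝ) → ℝ} {t : ι → ℝ}
    (hN : ∀ k, IsNorm (N k)) (ht : ∀ k, 0 < t k) (hN' : IsNorm N')
    (h : TendstoUniformlyOn (fun k x => N k x / t k) N' l (Metric.sphere 0 1)) :
    Tendsto (fun k => ecc (N k) N') l (𝓝 1) := by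
  refine tendsto_order.2 ⟨fun a ha => Eventually.of_forall fun k =>
    ha.trans_le (one_le_ecc (hN k) hN'), fun b hb => ?_⟩
  -- with this `δ`, `(1 + δ) / (1 - δ) = (2 b + 1) / 3`
  set δ := (b - 1) / (b + 2)
  have hδ : 0 < δ := div_pos (by linarith) (by linarith)
  have hδ1 : δ < 1 := (div_lt_one (by linarith)).2 (by linarith)
  have hδb : (1 + δ) / (1 - δ) < b := by
    rw [div_lt_iff₀ (by linarith)]
    simp only [δ]
    field_simp
    nlinarith
  filter_upwards [eventually_abs_sub_le_mul_of_tendstoUniformlyOn_sphere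
    (fun k => (hN k).isSeminorm.div_const (ht k).le) hN' h hδ] with k hk
  exact (ecc_le_of_abs_div_sub_le (hN k) hN' (ht k) hδ1 hk).trans_lt hδb

end Convergence

lemma tendsto_of_antitone_of_tendsto_comp {α : Type*} [LinearOrder α] [TopologicalSpace α]
    [OrderTopology α] {E : ℕ → α} {a : α} (hE : Antitone E) (ha : ∀ n, a ≤ E n) {φ : ℕ → ℕ}
    (hφ : Tendsto (E ∘ φ) atTop (𝓝 a)) : Tendsto E atTop (𝓝 a) := by
  refine tendsto_order.2 ⟨fun b hb => Eventually.of_forall fun n => hb.trans_le (ha n),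
    fun b hb => ?_⟩
  obtain ⟨k, hk⟩ := (hφ.eventually (gt_mem_nhds hb)).exists
  exact eventually_atTop.2 ⟨φ k, fun n hn => (hE hn).trans_lt hk⟩

lemma tendstoUniformlyOn_of_abs_sub_le {ι α : Type*} {l : Filter ι} {F : ι → α → ℝ} {G : α → ℝ}
    {S : Set α} {u : ι → ℝ} (hu : Tendsto u l (𝓝 0)) (h : ∀ k, ∀ x ∈ S, |F k x - G x| ≤ u k) :
    TendstoUniformlyOn F G l S :=
  Metric.tendstoUniformlyOn_iff.2 fun ε hε => (hu.eventually (gt_mem_nhds hε)).mono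
    fun k hk x hx => by rw [dist_comm, Real.dist_eq]; exact (h k x hx).trans_lt hk

theorem stmt7_general {m r : ℕ} (hm : 2 ≤ m)
    (A : Fin r → Matrix (Fin m) (Fin m) ℝ) (hA : IsIrreducibleFamily A)
    (γ : ℝ → ℝ → ℝ) (hγ : IsAveraging γ)
    (N0 : (Fin m → ℝ) → ℝ) (hN0 : IsNorm N0)
    (e : Fin m → ℝ) (he : N0 e = 1)
    (Nstar : (Fin m → ℝ) → ℝ) (hNs : IsNorm Nstar)
    (hbar : ∀ x, jsr A * Nstar x = maxA A Nstar x)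
    (φ : ℕ → ℕ)
    (hconv : ∀ S : Set (Fin m → ℝ), IsBounded S →
      TendstoUniformlyOn (fun k => iterNnorm A γ N0 e (φ k)) Nstar atTop S) :
    ∀ S : Set (Fin m → ℝ), IsBounded S →
      TendstoUniformlyOn (fun n => iterNnorm A γ N0 e n) Nstar atTop S := by
  have : NeZero m := ⟨by omega⟩
  have hker := fun x (hx : x ≠ 0) => hA.exists_mulVec_ne_zero hm hx
  have hN := isNorm_iterN hγ hN0 hker
  have hNe : ∀ n, 0 < iterN A γ N0 n e :=
    fun n => (hN n).pos fun h0 => by simp [h0, hN0.isSeminorm.map_zero] at he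
  have hNse : Nstar e = 1 := by
    refine tendsto_nhds_unique ((hconv {e} isBounded_singleton).tendsto_at rfl) ?_
    simp [iterNnorm, (hNe _).ne']
  have hecc : Tendsto (fun n => ecc (iterN A γ N0 n) Nstar) atTop (𝓝 1) :=
    tendsto_of_antitone_of_tendsto_comp (antitone_ecc_iterN hγ hN0 hker hNs hbar)
      (fun n => one_le_ecc (hN n) hNs)
      (tendsto_ecc_of_tendstoUniformlyOn_sphere (fun k => hN (φ k)) (fun k => hNe (φ k)) hNs
        (hconv _ Metric.isBounded_sphere))
  intro S hS
  obtain ⟨C, hC⟩ := hNs.isSeminorm.exists_forall_le_of_isBounded hS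
  refine tendstoUniformlyOn_of_abs_sub_le (u := fun n => (ecc (iterN A γ N0 n) Nstar - 1) * C)
    (by simpa using (hecc.sub_const 1).mul_const C) fun n x hx => ?_
  exact (abs_div_sub_le_ecc_sub_one_mul (hN n) hNs hNse x).trans
    (mul_le_mul_of_nonneg_left (hC x hx) (sub_nonneg.2 (one_le_ecc (hN n) hNs)))

/-- if a subsequence of the normalized norms `‖·‖°_{n_k}` converges uniformly
on bounded sets to a Barabanov norm `‖·‖*`, then the whole sequence `‖·‖°_n` converges
uniformly on bounded sets to the same Barabanov norm. -/
theorem stmt7 {m r : ℕ} (hm : 2 ≤ m) (hr : 1 ≤ r)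
    (A : Fin r → Matrix (Fin m) (Fin m) ℝ) (hA : IsIrreducibleFamily A)
    (γ : ℝ → ℝ → ℝ) (hγ : IsAveraging γ)
    (N0 : (Fin m → ℝ) → ℝ) (hN0 : IsNorm N0)
    (e : Fin m → ℝ) (he : N0 e = 1)
    (Nstar : (Fin m → ℝ) → ℝ) (hNs : IsNorm Nstar)
    (hbar : ∀ x, jsr A * Nstar x = maxA A Nstar x)
    (φ : ℕ → ℕ) (hφ : StrictMono φ)
    (hconv : ∀ S : Set (Fin m → ℝ), IsBounded S →
      TendstoUniformlyOn (fun k => iterNnorm A γ N0 e (φ k)) Nstar atTop S) :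
    ∀ S : Set (Fin m → ℝ), IsBounded S →
      TendstoUniformlyOn (fun n => iterNnorm A γ N0 e n) Nstar atTop S :=
  stmt7_general hm A hA γ hγ N0 hN0 e he Nstar hNs hbar φ hconv
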